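/- Let E be a nonempty finite set, let c : E → ℝ satisfy c(e) > 0 for every e ∈ E, and let U ⊆ ℝ_{≥0}^E be a nonempty closed convex set. Then the Lagrangian dual of the minimum-congestion problem attains its supremum: there exists λ* ∈ ℝ_{≥0}^E with Σ_{e∈E} λ*(e)·c(e) = 1 such that inf_{u ∈ U} Σ_{e∈E} λ*(e)·u(e) = inf_{u ∈ U} max_{e∈E} u(e)/c(e). -/

import Mathlib

/-! Weak duality is the pointwise bound `∑ λ e * u e ≤ max_e u e / c e` whenever `λ ≥ 0` and
`∑ λ e * c e = 1`. For the reverse inequality, let `θ` be the optimal congestion: the open box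
`{x | ∀ e, x e < θ * c e}` is convex and misses `U`, so Hahn–Banach separates it from `U` by a
linear functional. Since the box is a lower set, the functional has nonnegative weights, and
normalising them by their value at `c` gives a `λ*` whose dual value is at least `θ`. -/

open Set

noncomputable def congestion {E : Type*} (c u : E → ℝ) : ℝ := ⨆ e, u e / c e

section Congestion

variable {E : Type*} [Fintype E] {c : E → ℝ}

theorem div_le_congestion (u : E → ℝ) (e : E) : u e / c e ≤ congestion c u :=
  le_ciSup (f := fun e => u e / c e) (finite_range _).bddAbove e

theorem le_congestion_mul (hc : ∀ e, 0 < c e) (u : E → ℝ) (e : E) :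
    u e ≤ congestion c u * c e :=
  (div_le_iff₀ (hc e)).1 (div_le_congestion u e)

theorem congestion_nonneg [Nonempty E] (hc : ∀ e, 0 < c e) {u : E → ℝ} (hu : ∀ e, 0 ≤ u e) :
    0 ≤ congestion c u :=
  let e := Classical.arbitrary E
  (div_nonneg (hu e) (hc e).le).trans (div_le_congestion u e)

theorem congestion_lt_of_forall_lt_mul [Nonempty E] (hc : ∀ e, 0 < c e) {u : E → ℝ} {θ : ℝ}
    (hu : ∀ e, u e < θ * c e) : congestion c u < θ := by
  obtain ⟨e, he⟩ := exists_eq_ciSup_of_finite (f := fun e => u e / c e)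
  rw [congestion, ← he]
  exact (div_lt_iff₀ (hc e)).2 (hu e)

theorem weighted_sum_le_congestion (hc : ∀ e, 0 < c e) {lam : E → ℝ} (hlam : ∀ e, 0 ≤ lam e)
    (hsum : ∑ e, lam e * c e = 1) (u : E → ℝ) : ∑ e, lam e * u e ≤ congestion c u :=
  calc ∑ e, lam e * u e ≤ ∑ e, lam e * (congestion c u * c e) :=
        Finset.sum_le_sum fun e _ => mul_le_mul_of_nonneg_left (le_congestion_mul hc u e) (hlam e)
    _ = congestion c u * ∑ e, lam e * c e := by
        rw [Finset.mul_sum]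
        exact Finset.sum_congr rfl fun e _ => by ring
    _ = congestion c u := by rw [hsum, mul_one]

end Congestion

theorem LinearMap.map_nonneg_of_lt_on_isLowerSet {V : Type*} [AddCommGroup V] [PartialOrder V]
    [IsOrderedAddMonoid V] [Module ℝ V] [PosSMulMono ℝ V] (f : V →ₗ[ℝ] ℝ) {C : Set V}
    (hC : IsLowerSet C) {x : V} (hx : x ∈ C) {s : ℝ} (hf : ∀ y ∈ C, f y < s) {v : V}
    (hv : 0 ≤ v) : 0 ≤ f v := by
  by_contra! hneg
  set t := (s - f x) / -f v with ht_def
  have ht : 0 ≤ t := div_nonneg (sub_nonneg.2 (hf x hx).le) (neg_nonneg.2 hneg.le)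
  have hlt := hf _ (hC (sub_le_self _ (smul_nonneg ht hv)) hx)
  have htv : t * f v = f x - s := by
    rw [ht_def, div_neg, neg_mul, div_mul_cancel₀ _ hneg.ne]
    ring
  rw [map_sub, map_smul, smul_eq_mul, htv] at hlt
  linarith

theorem exists_nonneg_weights_separating {E : Type*} [Fintype E] {C U : Set (E → ℝ)}
    (hCopen : IsOpen C) (hCconv : Convex ℝ C) (hClow : IsLowerSet C) (hCne : C.Nonempty)
    (hU : Convex ℝ U) (hUne : U.Nonempty) (hdisj : Disjoint C U) :
    ∃ (w : E → ℝ) (s : ℝ), (∀ e, 0 ≤ w e) ∧ (∃ e, 0 < w e) ∧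
      (∀ x ∈ C, ∑ e, w e * x e < s) ∧ ∀ u ∈ U, s ≤ ∑ e, w e * u e := by
  classical
  obtain ⟨f, s, hfC, hfU⟩ := geometric_hahn_banach_open hCconv hCopen hU hdisj
  obtain ⟨x, hx⟩ := hCne
  obtain ⟨u, hu⟩ := hUne
  set w : E → ℝ := fun e => f (Pi.single e 1)
  have hf : ∀ y, f y = ∑ e, w e * y e := fun y => by
    nth_rw 1 [← Finset.univ_sum_single y]
    simp only [map_sum]
    refine Finset.sum_congr rfl fun e _ => ?_
    rw [mul_comm, ← smul_eq_mul, ← map_smul, ← Pi.single_smul, smul_eq_mul, mul_one]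
  have hw : ∀ e, 0 ≤ w e := fun e =>
    f.toLinearMap.map_nonneg_of_lt_on_isLowerSet hClow hx hfC (Pi.single_nonneg.2 zero_le_one)
  refine ⟨w, s, hw, ?_, fun y hy => hf y ▸ hfC y hy, fun y hy => hf y ▸ hfU y hy⟩
  by_contra! hw0
  have hfx := hfC x hx
  have hfu := hfU u hu
  simp only [hf, fun e => le_antisymm (hw0 e) (hw e), zero_mul, Finset.sum_const_zero] at hfx hfu
  linarith

theorem exists_weights_le_of_le_congestion {E : Type*} [Fintype E] [Nonempty E] {c : E → ℝ}
    (hc : ∀ e, 0 < c e) {U : Set (E → ℝ)} (hU : Convex ℝ U) (hUne : U.Nonempty) {θ : ℝ}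
    (hθ : ∀ u ∈ U, θ ≤ congestion c u) :
    ∃ lam : E → ℝ, (∀ e, 0 ≤ lam e) ∧ ∑ e, lam e * c e = 1 ∧ ∀ u ∈ U, θ ≤ ∑ e, lam e * u e := by
  set C : Set (E → ℝ) := univ.pi fun e => Iio (θ * c e)
  have hmem : ∀ r < θ, (fun e => r * c e) ∈ C := fun r hr e _ =>
    mul_lt_mul_of_pos_right hr (hc e)
  have hdisj : Disjoint C U := disjoint_left.2 fun u huC huU =>
    (hθ u huU).not_gt (congestion_lt_of_forall_lt_mul hc fun e => huC e (mem_univ e))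
  obtain ⟨w, s, hw, ⟨e₀, he₀⟩, hwC, hwU⟩ := exists_nonneg_weights_separating
    (isOpen_set_pi finite_univ fun _ _ => isOpen_Iio) (convex_pi fun _ _ => convex_Iio _)
    (fun x y hyx hx e he => (hyx e).trans_lt (hx e he)) ⟨_, hmem (θ - 1) (by linarith)⟩
    hU hUne hdisj
  set S := ∑ e, w e * c e
  have hS : 0 < S := Finset.sum_pos' (fun e _ => mul_nonneg (hw e) (hc e).le)
    ⟨e₀, Finset.mem_univ _, mul_pos he₀ (hc e₀)⟩
  have hθS : θ * S ≤ s := by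
    by_contra! hlt
    refine (hwC _ (hmem (s / S) ((div_lt_iff₀ hS).2 hlt))).ne' ?_
    calc s = s / S * S := (div_mul_cancel₀ s hS.ne').symm
      _ = ∑ e, w e * (s / S * c e) := by
          rw [Finset.mul_sum]
          exact Finset.sum_congr rfl fun e _ => by ring
  refine ⟨fun e => w e / S, fun e => div_nonneg (hw e) hS.le, ?_, fun u hu => ?_⟩
  · simp_rw [div_mul_eq_mul_div, ← Finset.sum_div]
    exact div_self hS.ne'
  · simp_rw [div_mul_eq_mul_div, ← Finset.sum_div]
    exact (le_div_iff₀ hS).2 (hθS.trans (hwU u hu))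

theorem csInf_image_eq_of_le_of_csInf_le {α β : Type*} [ConditionallyCompleteLattice β]
    {U : Set α} {f g : α → β} (hU : U.Nonempty) (hfg : ∀ u ∈ U, f u ≤ g u)
    (hf : ∀ u ∈ U, sInf (g '' U) ≤ f u) : sInf (f '' U) = sInf (g '' U) :=
  le_antisymm
    (le_csInf (hU.image g) (forall_mem_image.2 fun u hu =>
      (csInf_le ⟨_, forall_mem_image.2 hf⟩ (mem_image_of_mem f hu)).trans (hfg u hu)))
    (le_csInf (hU.image f) (forall_mem_image.2 hf))

theorem congestion_dual_attained_general
    {E : Type*} [Fintype E] [Nonempty E]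
    (c : E → ℝ) (hc : ∀ e, 0 < c e)
    (U : Set (E → ℝ)) (hUne : U.Nonempty) (hUconv : Convex ℝ U)
    (hUnn : ∀ u ∈ U, ∀ e, 0 ≤ u e) :
    ∃ lam : E → ℝ, (∀ e, 0 ≤ lam e) ∧ (∑ e, lam e * c e) = 1 ∧
      sInf ((fun u : E → ℝ => ∑ e, lam e * u e) '' U) =
        sInf ((fun u : E → ℝ => ⨆ e, u e / c e) '' U) := by
  have hbdd : BddBelow (congestion c '' U) :=
    ⟨0, forall_mem_image.2 fun u hu => congestion_nonneg hc (hUnn u hu)⟩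
  obtain ⟨lam, hlam, hsum, hdual⟩ := exists_weights_le_of_le_congestion hc hUconv hUne
    fun u hu => csInf_le hbdd (mem_image_of_mem _ hu)
  exact ⟨lam, hlam, hsum, csInf_image_eq_of_le_of_csInf_le hUne
    (fun u _ => weighted_sum_le_congestion hc hlam hsum u) hdual⟩

/-- **The Lagrangian dual of the minimum-congestion problem attains its supremum.**
There is a `λ* ≥ 0` with `∑_e λ* e * c e = 1` whose dual value
`inf_{u ∈ U} ∑_e λ* e * u e` equals the optimal congestion
`inf_{u ∈ U} max_e u e / c e`. -/
theorem congestion_dual_attained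
    {E : Type*} [Fintype E] [Nonempty E]
    (c : E → ℝ) (hc : ∀ e, 0 < c e)
    (U : Set (E → ℝ)) (hUne : U.Nonempty) (hUcl : IsClosed U) (hUconv : Convex ℝ U)
    (hUnn : ∀ u ∈ U, ∀ e, 0 ≤ u e) :
    ∃ lam : E → ℝ, (∀ e, 0 ≤ lam e) ∧ (∑ e, lam e * c e) = 1 ∧
      sInf ((fun u : E → ℝ => ∑ e, lam e * u e) '' U) =
        sInf ((fun u : E → ℝ => ⨆ e, u e / c e) '' U) :=
  congestion_dual_attained_general c hc U hUne hUconv hUnn
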